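/- Let A ∈ ℝ^{n×n} be nonsingular and H ∈ ℝ^{n×r}. If the n×r matrix Ĥ = T_A^T H (with T_A from the SVD of A) satisfies rank(AH) = rank(Ĥ) = r, then ‖(AH)⁺‖ ≤ ‖A⁺‖ · ‖Ĥ⁺‖. -/

import Mathlib

open Matrix

/-- The `j`-th largest singular value (1-indexed) of a real matrix, defined as the square
root of the `j`-th largest eigenvalue of `AᴴA`; it is `0` for `j` out of range. -/
noncomputable def singularValue {m n : ℕ} (A : Matrix (Fin m) (Fin n) ℝ) (j : ℕ) : ℝ :=
  if h : 1 ≤ j ∧ j ≤ n then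
    Real.sqrt ((Matrix.isHermitian_conjTranspose_mul_self A).eigenvalues
      (Tuple.sort (Matrix.isHermitian_conjTranspose_mul_self A).eigenvalues ⟨n - j, by omega⟩))
  else 0


/-- The Moore–Penrose pseudoinverse of a full-column-rank matrix: `A⁺ = (AᵀA)⁻¹ Aᵀ`. -/
noncomputable def pinvFCR {m n : ℕ} (A : Matrix (Fin m) (Fin n) ℝ) : Matrix (Fin n) (Fin m) ℝ :=
  (Aᵀ * A)⁻¹ * Aᵀ

/-! The top singular value is the spectral norm, so for `X` of full column rank `‖X⁺‖` is the
least `K ≥ 0` with `‖x‖ ≤ K ‖X x‖` for all `x`: `X⁺ X = 1` gives one direction, and the other holds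
because `X X⁺` is an orthogonal projection, of norm at most `1`. As `Tᵀ` is orthogonal,
`‖x‖ ≤ ‖Ĥ⁺‖ ‖Ĥ x‖ = ‖Ĥ⁺‖ ‖H x‖ ≤ ‖Ĥ⁺‖ ‖A⁺‖ ‖A H x‖`. -/

open scoped Matrix.Norms.L2Operator

namespace Matrix

theorem isUnit_of_rank_eq_card {R ι : Type*} [Field R] [Fintype ι] [DecidableEq ι]
    {B : Matrix ι ι R} (h : B.rank = Fintype.card ι) : IsUnit B := by
  refine mulVec_surjective_iff_isUnit.mp ((LinearMap.range_eq_top (f := B.mulVecLin)).mp ?_)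
  apply Submodule.eq_top_of_finrank_eq
  rw [← rank, h, Module.finrank_fintype_fun_eq_card]

theorem isUnit_transpose_mul_self_of_rank_eq_card {R ι κ : Type*} [Field R] [LinearOrder R]
    [IsStrictOrderedRing R] [Fintype ι] [Fintype κ] [DecidableEq κ] {X : Matrix ι κ R}
    (h : X.rank = Fintype.card κ) : IsUnit (Xᵀ * X) :=
  isUnit_of_rank_eq_card (by rw [rank_transpose_mul_self, h])

theorem l2_opNorm_eq_norm_eigenvalues {𝕜 ι : Type*} [RCLike 𝕜] [Fintype ι] [DecidableEq ι]
    {B : Matrix ι ι 𝕜} (hB : B.IsHermitian) : ‖B‖ = ‖hB.eigenvalues‖ := by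
  conv_lhs => rw [hB.spectral_theorem]
  rw [Unitary.conjStarAlgAut_apply,
    CStarRing.norm_mul_mem_unitary _ (Unitary.star_mem hB.eigenvectorUnitary.2),
    CStarRing.norm_coe_unitary_mul, l2_opNorm_diagonal]
  simp [Pi.norm_def]

theorem norm_toEuclideanLin_le {𝕜 ι κ : Type*} [RCLike 𝕜] [Fintype ι] [Fintype κ]
    [DecidableEq κ] (M : Matrix ι κ 𝕜) (x : EuclideanSpace 𝕜 κ) :
    ‖toEuclideanLin M x‖ ≤ ‖M‖ * ‖x‖ :=
  ((toEuclideanLin.trans LinearMap.toContinuousLinearMap) M).le_opNorm x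

theorem norm_toEuclideanLin_of_mem_unitaryGroup {𝕜 ι : Type*} [RCLike 𝕜] [Fintype ι]
    [DecidableEq ι] {U : Matrix ι ι 𝕜} (hU : U ∈ unitaryGroup ι 𝕜) (x : EuclideanSpace 𝕜 ι) :
    ‖toEuclideanLin U x‖ = ‖x‖ :=
  ContinuousLinearMap.norm_map_of_mem_unitary
    (Unitary.map_mem (toEuclideanCLM (n := ι) (𝕜 := 𝕜)) hU) x

end Matrix

theorem Tuple.apply_le_apply_sort_last {α : Type*} [LinearOrder α] {n : ℕ} (f : Fin n → α)
    (hn : 1 ≤ n) (i : Fin n) : f i ≤ f (Tuple.sort f ⟨n - 1, by omega⟩) := by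
  have hi : (Tuple.sort f)⁻¹ i ≤ ⟨n - 1, by omega⟩ :=
    Fin.le_iff_val_le_val.mpr (Nat.le_sub_one_of_lt (Fin.is_lt _))
  simpa using Tuple.monotone_sort f hi

theorem norm_eq_apply_sort_last_of_nonneg {n : ℕ} {f : Fin n → ℝ} (hf : 0 ≤ f) (hn : 1 ≤ n) :
    ‖f‖ = f (Tuple.sort f ⟨n - 1, by omega⟩) := by
  refine le_antisymm ((pi_norm_le_iff_of_nonneg (hf _)).mpr fun i => ?_) ?_
  · rw [Real.norm_of_nonneg (hf i)]
    exact Tuple.apply_le_apply_sort_last f hn i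
  · exact (Real.le_norm_self _).trans (norm_le_pi_norm f _)

section PseudoInverse

variable {m n : ℕ}

theorem singularValue_one_eq_l2_opNorm (X : Matrix (Fin m) (Fin n) ℝ) :
    singularValue X 1 = ‖X‖ := by
  rcases Nat.eq_zero_or_pos n with rfl | hn
  · simp [singularValue, Subsingleton.elim X 0]
  have hXX := isHermitian_conjTranspose_mul_self X
  have hsq : ‖X‖ ^ 2 = ‖hXX.eigenvalues‖ := by
    rw [sq, ← l2_opNorm_conjTranspose_mul_self, l2_opNorm_eq_norm_eigenvalues hXX]
  rw [singularValue, dif_pos ⟨le_rfl, hn⟩, ← norm_eq_apply_sort_last_of_nonneg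
    (fun i => (posSemidef_conjTranspose_mul_self X).eigenvalues_nonneg i) hn, ← hsq,
    Real.sqrt_sq (norm_nonneg X)]

theorem pinvFCR_mul_self {X : Matrix (Fin m) (Fin n) ℝ} (hX : X.rank = n) :
    pinvFCR X * X = 1 := by
  have hdet : IsUnit (Xᵀ * X).det :=
    (isUnit_iff_isUnit_det _).mp (isUnit_transpose_mul_self_of_rank_eq_card (by simpa using hX))
  rw [pinvFCR, Matrix.mul_assoc, nonsing_inv_mul _ hdet]

theorem isStarProjection_mul_pinvFCR {X : Matrix (Fin m) (Fin n) ℝ} (hX : X.rank = n) :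
    IsStarProjection (X * pinvFCR X) where
  isIdempotentElem := by
    rw [IsIdempotentElem, Matrix.mul_assoc, ← Matrix.mul_assoc (pinvFCR X), pinvFCR_mul_self hX,
      Matrix.one_mul]
  isSelfAdjoint := by
    rw [IsSelfAdjoint, star_eq_conjTranspose, conjTranspose_eq_transpose_of_trivial, pinvFCR,
      ← Matrix.mul_assoc, transpose_mul, transpose_mul, transpose_nonsing_inv, transpose_mul,
      transpose_transpose, Matrix.mul_assoc]

theorem norm_le_l2_opNorm_pinvFCR_mul {X : Matrix (Fin m) (Fin n) ℝ} (hX : X.rank = n)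
    (x : EuclideanSpace ℝ (Fin n)) :
    ‖x‖ ≤ ‖pinvFCR X‖ * ‖toEuclideanLin X x‖ := by
  calc ‖x‖ = ‖toEuclideanLin (pinvFCR X) (toEuclideanLin X x)‖ := by
        rw [← LinearMap.comp_apply, ← toLpLin_mul, pinvFCR_mul_self hX, toLpLin_one,
          LinearMap.id_apply]
    _ ≤ ‖pinvFCR X‖ * ‖toEuclideanLin X x‖ := norm_toEuclideanLin_le (pinvFCR X) _

theorem l2_opNorm_pinvFCR_le {X : Matrix (Fin m) (Fin n) ℝ} (hX : X.rank = n) {K : ℝ}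
    (hK : 0 ≤ K) (h : ∀ x, ‖x‖ ≤ K * ‖toEuclideanLin X x‖) : ‖pinvFCR X‖ ≤ K := by
  refine ContinuousLinearMap.opNorm_le_bound _ hK fun y => ?_
  have hP : ‖X * pinvFCR X‖ ≤ 1 := (isStarProjection_mul_pinvFCR hX).norm_le
  calc ‖toEuclideanLin (pinvFCR X) y‖ ≤ K * ‖toEuclideanLin (X * pinvFCR X) y‖ := by
        rw [toLpLin_mul 2 2 2]
        exact h _
    _ ≤ K * ‖y‖ := by
        gcongr
        exact (norm_toEuclideanLin_le (X * pinvFCR X) y).trans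
          (mul_le_of_le_one_left (norm_nonneg y) hP)

end PseudoInverse

theorem pinv_norm_mul_le_general
    {n r : ℕ} (A : Matrix (Fin n) (Fin n) ℝ) (hA : IsUnit A.det)
    (T : Matrix (Fin n) (Fin n) ℝ) (hT : Tᵀ * T = 1)
    (H : Matrix (Fin n) (Fin r) ℝ)
    (h1 : (A * H).rank = r) (h2 : (Tᵀ * H).rank = r) :
    singularValue (pinvFCR (A * H)) 1 ≤
      singularValue (pinvFCR A) 1 * singularValue (pinvFCR (Tᵀ * H)) 1 := by
  have hA' : A.rank = n := by
    simpa using rank_of_isUnit A ((isUnit_iff_isUnit_det A).mpr hA)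
  have hT' : Tᵀ ∈ unitaryGroup (Fin n) ℝ := by
    rwa [mem_unitaryGroup_iff, star_eq_conjTranspose, conjTranspose_eq_transpose_of_trivial,
      transpose_transpose]
  simp only [singularValue_one_eq_l2_opNorm]
  refine l2_opNorm_pinvFCR_le h1 (by positivity) fun x => ?_
  calc ‖x‖ ≤ ‖pinvFCR (Tᵀ * H)‖ * ‖toEuclideanLin (Tᵀ * H) x‖ :=
        norm_le_l2_opNorm_pinvFCR_mul h2 x
    _ = ‖pinvFCR (Tᵀ * H)‖ * ‖toEuclideanLin H x‖ := by
        rw [toLpLin_mul 2 2 2, LinearMap.comp_apply, norm_toEuclideanLin_of_mem_unitaryGroup hT']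
    _ ≤ ‖pinvFCR (Tᵀ * H)‖ * (‖pinvFCR A‖ * ‖toEuclideanLin A (toEuclideanLin H x)‖) := by
        gcongr
        exact norm_le_l2_opNorm_pinvFCR_mul hA' _
    _ = ‖pinvFCR A‖ * ‖pinvFCR (Tᵀ * H)‖ * ‖toEuclideanLin (A * H) x‖ := by
        rw [toLpLin_mul 2 2 2, LinearMap.comp_apply]
        ring

/-- Let `A ∈ ℝ^{n×n}` be nonsingular with SVD `A = S Σ Tᵀ` and `H ∈ ℝ^{n×r}`. If
`Ĥ = Tᵀ H` satisfies `rank(A H) = rank Ĥ = r`, then `‖(A H)⁺‖ ≤ ‖A⁺‖ · ‖Ĥ⁺‖`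
(spectral norms, `M⁺` the Moore–Penrose pseudoinverse of a full-column-rank matrix). -/
theorem pinv_norm_mul_le
    {n r : ℕ} (hr : r ≤ n) (A : Matrix (Fin n) (Fin n) ℝ) (hA : IsUnit A.det)
    (S T : Matrix (Fin n) (Fin n) ℝ) (hS : Sᵀ * S = 1) (hT : Tᵀ * T = 1)
    (hSVD : A = S * Matrix.diagonal (fun i : Fin n => singularValue A (i.1 + 1)) * Tᵀ)
    (H : Matrix (Fin n) (Fin r) ℝ)
    (h1 : (A * H).rank = r) (h2 : (Tᵀ * H).rank = r) :
    singularValue (pinvFCR (A * H)) 1 ≤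
      singularValue (pinvFCR A) 1 * singularValue (pinvFCR (Tᵀ * H)) 1 :=
  pinv_norm_mul_le_general A hA T hT H h1 h2
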